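/- Let f be smooth on ℝ⁴, b a point with X1 f(b) = X2 f(b) = Gf(b) = 0 and d_b(Gf)(ξ_f(b)) = 0, and α, β, γ reals with β + γb₁ = 0. Set f_ε = f + α x₂ + (β/2)x₂² + γ x₄. Then d_b(G f_ε)(ξ_{f_ε}(b)) = −γ · X11 f(b) · X21 f(b). In particular, if γ ≠ 0, X11 f(b) ≠ 0 and X21 f(b) ≠ 0, then d_b(G f_ε)(ξ_{f_ε}(b)) ≠ 0. -/

import Mathlib

noncomputable section

open Metric Set Function

/-- ℝ⁴ with the Euclidean metric. Coordinates: `x 0 = x₁`, `x 1 = x₂`, `x 2 = x₃`, `x 3 = x₄`. -/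
abbrev E4 := EuclideanSpace ℝ (Fin 4)

/-- The vector field X1 = ∂/∂x1. -/
def X1v (_ : E4) : E4 := (WithLp.equiv 2 (Fin 4 → ℝ)).symm ![1, 0, 0, 0]

/-- The vector field X2 = ∂/∂x2 + x1·∂/∂x3 + x3·∂/∂x4. -/
def X2v (x : E4) : E4 := (WithLp.equiv 2 (Fin 4 → ℝ)).symm ![0, 1, x 0, x 2]

/-- The vector field X3 = ∂/∂x3. -/
def X3v (_ : E4) : E4 := (WithLp.equiv 2 (Fin 4 → ℝ)).symm ![0, 0, 1, 0]

/-- The vector field X4 = ∂/∂x4. -/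
def X4v (_ : E4) : E4 := (WithLp.equiv 2 (Fin 4 → ℝ)).symm ![0, 0, 0, 1]

/-- X1 f : derivative of f along X1. -/
def X1 (f : E4 → ℝ) (x : E4) : ℝ := fderiv ℝ f x (X1v x)

/-- X2 f : derivative of f along X2. -/
def X2 (f : E4 → ℝ) (x : E4) : ℝ := fderiv ℝ f x (X2v x)

/-- X3 f : derivative of f along X3. -/
def X3 (f : E4 → ℝ) (x : E4) : ℝ := fderiv ℝ f x (X3v x)

/-- X4 f : derivative of f along X4. -/
def X4 (f : E4 → ℝ) (x : E4) : ℝ := fderiv ℝ f x (X4v x)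

/-- The plane Δ_x = span{X1(x), X2(x)}. -/
def Delta (x : E4) : Submodule ℝ E4 := Submodule.span ℝ {X1v x, X2v x}

/-- Gf = X11f·X22f − X21f·X12f. -/
def Gof (f : E4 → ℝ) (x : E4) : ℝ :=
  X1 (X1 f) x * X2 (X2 f) x - X2 (X1 f) x * X1 (X2 f) x

/-- ξ_f = −(X21f)·X1 + (X11f)·X2. -/
def xiv (f : E4 → ℝ) (x : E4) : E4 := -(X2 (X1 f) x) • X1v x + (X1 (X1 f) x) • X2v x

/-- The perturbation f_ε = f + α·x₂ + (β/2)·x₂² + γ·x₄. -/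
def fEps (f : E4 → ℝ) (α β γ : ℝ) (x : E4) : ℝ :=
  f x + α * x 1 + β / 2 * (x 1) ^ 2 + γ * x 3


section Aux

lemma contDiff_X2v : ContDiff ℝ (⊤ : ℕ∞) X2v := by
  rw [contDiff_euclidean]
  intro i
  fin_cases i <;> simp [X2v, WithLp.equiv_symm_apply, PiLp.toLp_apply]
  · exact contDiff_const
  · exact contDiff_const
  · exact (EuclideanSpace.proj (0 : Fin 4) : E4 →L[ℝ] ℝ).contDiff
  · exact (EuclideanSpace.proj (2 : Fin 4) : E4 →L[ℝ] ℝ).contDiff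

lemma contDiff_X1 {f : E4 → ℝ} (hf : ContDiff ℝ (⊤ : ℕ∞) f) : ContDiff ℝ (⊤ : ℕ∞) (X1 f) :=
  (hf.fderiv_right (by simp)).clm_apply contDiff_const

lemma contDiff_X2 {f : E4 → ℝ} (hf : ContDiff ℝ (⊤ : ℕ∞) f) : ContDiff ℝ (⊤ : ℕ∞) (X2 f) :=
  (hf.fderiv_right (by simp)).clm_apply contDiff_X2v

lemma hasFDerivAt_pert (α β γ : ℝ) (x : E4) :
    HasFDerivAt (fun x : E4 => α * x 1 + β / 2 * (x 1) ^ 2 + γ * x 3)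
      ((α + β * x 1) • (EuclideanSpace.proj 1 : E4 →L[ℝ] ℝ)
        + γ • (EuclideanSpace.proj 3 : E4 →L[ℝ] ℝ)) x := by
  have h1 : HasFDerivAt (fun x : E4 => x 1) (EuclideanSpace.proj 1 : E4 →L[ℝ] ℝ) x :=
    (EuclideanSpace.proj (1 : Fin 4) : E4 →L[ℝ] ℝ).hasFDerivAt
  have h3 : HasFDerivAt (fun x : E4 => x 3) (EuclideanSpace.proj 3 : E4 →L[ℝ] ℝ) x :=
    (EuclideanSpace.proj (3 : Fin 4) : E4 →L[ℝ] ℝ).hasFDerivAt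
  have h := ((h1.const_mul α).add
    (((hasDerivAt_pow 2 (x 1)).comp_hasFDerivAt x h1).const_mul (β / 2))).add (h3.const_mul γ)
  refine h.congr_fderiv ?_
  ext v
  simp
  ring

lemma hasFDerivAt_q (α β γ : ℝ) (x : E4) :
    HasFDerivAt (fun x : E4 => α + β * x 1 + γ * x 2)
      (β • (EuclideanSpace.proj 1 : E4 →L[ℝ] ℝ)
        + γ • (EuclideanSpace.proj 2 : E4 →L[ℝ] ℝ)) x := by
  have h1 : HasFDerivAt (fun x : E4 => x 1) (EuclideanSpace.proj 1 : E4 →L[ℝ] ℝ) x :=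
    (EuclideanSpace.proj (1 : Fin 4) : E4 →L[ℝ] ℝ).hasFDerivAt
  have h2 : HasFDerivAt (fun x : E4 => x 2) (EuclideanSpace.proj 2 : E4 →L[ℝ] ℝ) x :=
    (EuclideanSpace.proj (2 : Fin 4) : E4 →L[ℝ] ℝ).hasFDerivAt
  have h := ((hasFDerivAt_const α x).add (h1.const_mul β)).add (h2.const_mul γ)
  refine h.congr_fderiv ?_
  simp

end Aux

/-- if X1f(b) = X2f(b) = Gf(b) = 0, d_b(Gf)(ξ_f(b)) = 0 and β + γb₁ = 0,
then d_b(Gf_ε)(ξ_{f_ε}(b)) = −γ·X11f(b)·X21f(b); in particular it is nonzero whenever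
γ ≠ 0, X11f(b) ≠ 0 and X21f(b) ≠ 0. -/
theorem stmt11 (f : E4 → ℝ) (hf : ContDiff ℝ (⊤ : ℕ∞) f) (b : E4) (α β γ : ℝ)
    (hb1 : X1 f b = 0) (hb2 : X2 f b = 0) (hbG : Gof f b = 0)
    (hxi : fderiv ℝ (Gof f) b (xiv f b) = 0) (hbg : β + γ * b 0 = 0) :
    fderiv ℝ (Gof (fEps f α β γ)) b (xiv (fEps f α β γ) b)
      = -γ * (X1 (X1 f) b * X2 (X1 f) b) ∧
    (γ ≠ 0 → X1 (X1 f) b ≠ 0 → X2 (X1 f) b ≠ 0 →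
      fderiv ℝ (Gof (fEps f α β γ)) b (xiv (fEps f α β γ) b) ≠ 0) := by
  set g := fEps f α β γ with hg
  have hdf := hf.differentiable (by simp)
  have cd1 := contDiff_X1 hf
  have cd2 := contDiff_X2 hf
  have cd11 := contDiff_X1 cd1
  have cd21 := contDiff_X2 cd1
  have cd12 := contDiff_X1 cd2
  have cd22 := contDiff_X2 cd2
  have hgeq : g = fun x => f x + (α * x 1 + β / 2 * (x 1) ^ 2 + γ * x 3) := by
    funext x; simp only [hg, fEps]; ring
  have hDg : ∀ x : E4, fderiv ℝ g x = fderiv ℝ f x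
      + ((α + β * x 1) • (EuclideanSpace.proj 1 : E4 →L[ℝ] ℝ)
        + γ • (EuclideanSpace.proj 3 : E4 →L[ℝ] ℝ)) := by
    intro x
    rw [hgeq]
    exact ((hdf x).hasFDerivAt.add (hasFDerivAt_pert α β γ x)).fderiv
  have hX1g : X1 g = X1 f := by
    funext x
    simp [X1, hDg x, X1v, WithLp.equiv_symm_apply, PiLp.toLp_apply]
  have hX2g : X2 g = fun x => X2 f x + (α + β * x 1 + γ * x 2) := by
    funext x
    simp [X2, hDg x, X2v, WithLp.equiv_symm_apply, PiLp.toLp_apply]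
  have hDX2g : ∀ x : E4, fderiv ℝ (X2 g) x = fderiv ℝ (X2 f) x
      + (β • (EuclideanSpace.proj 1 : E4 →L[ℝ] ℝ)
        + γ • (EuclideanSpace.proj 2 : E4 →L[ℝ] ℝ)) := by
    intro x
    rw [hX2g]
    exact ((cd2.differentiable (by simp) x).hasFDerivAt.add (hasFDerivAt_q α β γ x)).fderiv
  have hX12g : ∀ x : E4, X1 (X2 g) x = X1 (X2 f) x := by
    intro x; simp [X1, hDX2g x, X1v, WithLp.equiv_symm_apply, PiLp.toLp_apply]
  have hX22g : ∀ x : E4, X2 (X2 g) x = X2 (X2 f) x + (β + γ * x 0) := by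
    intro x; simp [X2, hDX2g x, X2v, WithLp.equiv_symm_apply, PiLp.toLp_apply]
  have hGg : Gof g = fun x => Gof f x + (β + γ * x 0) * X1 (X1 f) x := by
    funext x
    simp only [Gof, hX1g, hX12g x, hX22g x]
    ring
  have hxig : xiv g b = xiv f b := by simp only [xiv, hX1g]
  have h0 : HasFDerivAt (fun x : E4 => β + γ * x 0)
      (γ • (EuclideanSpace.proj 0 : E4 →L[ℝ] ℝ)) b := by
    have h := (hasFDerivAt_const β b).add
      (((EuclideanSpace.proj (0 : Fin 4) : E4 →L[ℝ] ℝ).hasFDerivAt (x := b)).const_mul γ)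
    refine h.congr_fderiv ?_
    ext v
    simp
  have h11 : HasFDerivAt (X1 (X1 f)) (fderiv ℝ (X1 (X1 f)) b) b :=
    (cd11.differentiable (by simp) b).hasFDerivAt
  have hP := h0.mul h11
  have hGfd : DifferentiableAt ℝ (Gof f) b := by
    have heq : Gof f = fun x => X1 (X1 f) x * X2 (X2 f) x - X2 (X1 f) x * X1 (X2 f) x := rfl
    rw [heq]
    exact ((cd11.differentiable (by simp) b).mul (cd22.differentiable (by simp) b)).sub
      ((cd21.differentiable (by simp) b).mul (cd12.differentiable (by simp) b))
  have hD : fderiv ℝ (Gof g) b = fderiv ℝ (Gof f) b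
      + ((β + γ * b 0) • fderiv ℝ (X1 (X1 f)) b
        + X1 (X1 f) b • (γ • (EuclideanSpace.proj 0 : E4 →L[ℝ] ℝ))) := by
    rw [hGg]
    exact (hGfd.hasFDerivAt.add hP).fderiv
  have hxicoord : (xiv f b) 0 = -(X2 (X1 f) b) := by
    simp [xiv, X1v, X2v, WithLp.equiv_symm_apply, PiLp.toLp_apply]
  have key : fderiv ℝ (Gof g) b (xiv g b) = -γ * (X1 (X1 f) b * X2 (X1 f) b) := by
    rw [hxig, hD]
    simp [hxi, hbg, hxicoord]
    ring
  refine ⟨key, fun hγ h11ne h21ne => ?_⟩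
  rw [key]
  exact mul_ne_zero (neg_ne_zero.mpr hγ) (mul_ne_zero h11ne h21ne)
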